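/- arXiv:2504.13066 — 3 statements merged into one kernel-verified Lean document; each statement's English description precedes it below -/
import Mathlib

section
/- Define ψ̃_m^{(2)}(u,v) := Σ_{i=0}^{m} [(-m)_i / i!]·(n_1−m+1)_i·(n_2−m+1)_{m−i}·(−v)_i·(−u)_{m−i}, where (a)_j denotes the Pochhammer symbol. If u, v are nonnegative integers with u + v < m, then ψ̃_m^{(2)}(u,v) = 0. -/
/-- Rising factorial (Pochhammer symbol) `(a)_j = a(a+1)⋯(a+j-1)`. -/
def poch (a : ℚ) (j : ℕ) : ℚ := ∏ i ∈ Finset.range j, (a + i)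

/-- The two-variable Hahn polynomial factor `ψ̃ₘ⁽²⁾(u,v)`. -/
def psi2 (n1 n2 m u v : ℕ) : ℚ :=
  ∑ i ∈ Finset.range (m + 1),
    poch (-(m : ℚ)) i / (Nat.factorial i : ℚ) *
      poch ((n1 : ℚ) - m + 1) i * poch ((n2 : ℚ) - m + 1) (m - i) *
      poch (-(v : ℚ)) i * poch (-(u : ℚ)) (m - i)

/-! Each summand carries the factor `(-v)_i (-u)_{m-i}`. A rising factorial `(-k)_j` with `j > k`
contains the factor `-k + k = 0`, and since `u + v < m`, either `i > v` or `m - i > u`. -/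

theorem poch_neg_natCast_eq_zero {k j : ℕ} (h : k < j) : poch (-(k : ℚ)) j = 0 :=
  Finset.prod_eq_zero (Finset.mem_range.mpr h) (by simp)

theorem psi2_vanish (n1 n2 m u v : ℕ) (h : u + v < m) : psi2 n1 n2 m u v = 0 := by
  refine Finset.sum_eq_zero fun i _ => ?_
  rcases lt_or_ge v i with hv | hv
  · rw [poch_neg_natCast_eq_zero hv, mul_zero, zero_mul]
  · rw [poch_neg_natCast_eq_zero (show u < m - i by omega), mul_zero]
end

section
/- With f(u) := (−1)^u·(n_2−k+1)_u·(n_1−k+1)_{k−u} and v = k−u, for all 0 ≤ u ≤ k: ((n_1−u)(n_2−v) + uv)·f(u) + u(n_2−v)·f(u−1) + v(n_1−u)·f(u+1) = (n_1·n_2 − (n_1+n_2)k + k² − k)·f(u). -/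
/-- `f(u) = (−1)ᵘ (n₂−k+1)ᵤ (n₁−k+1)_{k−u}`. -/
def fInv (n1 n2 k u : ℕ) : ℚ :=
  (-1 : ℚ) ^ u * poch ((n2 : ℚ) - k + 1) u * poch ((n1 : ℚ) - k + 1) (k - u)

lemma sub_mul_fInv_succ (n1 n2 k u : ℕ) (hu : u < k) :
    ((n1 : ℚ) - u) * fInv n1 n2 k (u + 1) = -((n2 : ℚ) - k + 1 + u) * fInv n1 n2 k u := by
  have hsucc : k - u = (k - (u + 1)) + 1 := by omega
  have hcast : ((k - (u + 1) : ℕ) : ℚ) = k - u - 1 := by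
    rw [Nat.cast_sub hu]; push_cast; ring
  unfold fInv poch
  rw [hsucc, Finset.prod_range_succ _ (k - (u + 1)), Finset.prod_range_succ _ u, pow_succ, hcast]
  ring

lemma mul_fInv_pred (n1 n2 k u : ℕ) (hu : u ≤ k) :
    (u : ℚ) * ((n2 : ℚ) - k + u) * fInv n1 n2 k (u - 1) =
      -(u : ℚ) * ((n1 : ℚ) - u + 1) * fInv n1 n2 k u := by
  cases u with
  | zero => simp
  | succ w =>
    have h := sub_mul_fInv_succ n1 n2 k w (by omega)
    simp only [Nat.add_sub_cancel]
    push_cast at h ⊢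
    linear_combination ((w : ℚ) + 1) * h

lemma sub_mul_sub_mul_fInv_succ (n1 n2 k u : ℕ) (hu : u ≤ k) :
    ((k : ℚ) - u) * ((n1 : ℚ) - u) * fInv n1 n2 k (u + 1) =
      -((k : ℚ) - u) * ((n2 : ℚ) - k + 1 + u) * fInv n1 n2 k u := by
  rcases hu.lt_or_eq with hlt | rfl
  · linear_combination ((k : ℚ) - u) * sub_mul_fInv_succ n1 n2 k u hlt
  · ring

theorem fInv_eigen_general (n1 n2 k : ℕ)
    (u : ℕ) (hu : u ≤ k) :
    (((n1 : ℚ) - u) * ((n2 : ℚ) - (k - u : ℕ)) + (u : ℚ) * ((k - u : ℕ) : ℚ)) *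
          fInv n1 n2 k u +
        (u : ℚ) * ((n2 : ℚ) - (k - u : ℕ)) * fInv n1 n2 k (u - 1) +
        ((k - u : ℕ) : ℚ) * ((n1 : ℚ) - u) * fInv n1 n2 k (u + 1) =
      ((n1 : ℚ) * n2 - ((n1 : ℚ) + n2) * k + (k : ℚ) ^ 2 - k) * fInv n1 n2 k u := by
  rw [Nat.cast_sub hu]
  linear_combination mul_fInv_pred n1 n2 k u hu + sub_mul_sub_mul_fInv_succ n1 n2 k u hu

theorem fInv_eigen (n1 n2 k : ℕ) (hk1 : k ≤ n1) (hk2 : k ≤ n2)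
    (u : ℕ) (hu : u ≤ k) :
    (((n1 : ℚ) - u) * ((n2 : ℚ) - (k - u : ℕ)) + (u : ℚ) * ((k - u : ℕ) : ℚ)) *
          fInv n1 n2 k u +
        (u : ℚ) * ((n2 : ℚ) - (k - u : ℕ)) * fInv n1 n2 k (u - 1) +
        ((k - u : ℕ) : ℚ) * ((n1 : ℚ) - u) * fInv n1 n2 k (u + 1) =
      ((n1 : ℚ) * n2 - ((n1 : ℚ) + n2) * k + (k : ℚ) ^ 2 - k) * fInv n1 n2 k u :=
  fInv_eigen_general n1 n2 k u hu
end

section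
/- For the two-factor Young subgroup S_{n_1}×S_{n_2} ≤ S_N (N = n_1 + n_2) and the two-cycle g_2 exchanging one point of each block, the spherical function of the irreducible representation [N−k, k] at g_2 equals (n_1·n_2 − (n_1+n_2)k + k² − k)/(n_1·n_2), for 0 ≤ k ≤ min(n_1, n_2). -/
/-!
Write `χ^[N−k,k]` as the difference of the permutation characters on `k`- and `(k−1)`-subsets.
Averaging the character on `c`-subsets over `g₂h`, `h` in the Young subgroup `G = S_B × S_Bᶜ`,
counts pairs `(h, s)` with `h s = g₂ s`. Such `h` exist only if `g₂ s = s` (the swap changes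
`|s ∩ B|` otherwise), i.e. if `s` contains both or neither of the swapped points `a ∈ B`,
`b ∉ B`; they then form the stabilizer of `s`, of index `C(n₁, |s ∩ B|) · C(n₂, |s \ B|)`.
Grouping `s` by `(i, j) = (|s ∩ B|, |s \ B|)`, each group contributes the probability that a
random `i`-subset of `B` contains `a` exactly when a random `j`-subset of `Bᶜ` contains `b`,
namely `(ij + (n₁ − i)(n₂ − j)) / (n₁n₂)`. Summing over `i + j = c` and taking the difference
between `c = k` and `c = k − 1` gives the stated polynomial.
-/

open Finset

/-- The character of the irreducible representation `[N−k, k]` of `S_N`,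
expressed as (number of `k`-subsets fixed by `w`) minus
(number of `(k−1)`-subsets fixed by `w`). -/
def chiTwoRow (N k : ℕ) (w : Equiv.Perm (Fin N)) : ℚ :=
  ((Finset.univ.filter fun s : Finset (Fin N) => s.card = k ∧ s.image ⇑w = s).card : ℚ) -
    ((Finset.univ.filter fun s : Finset (Fin N) => s.card + 1 = k ∧ s.image ⇑w = s).card : ℚ)

/-- The Young subgroup `S_{n₁} × S_{n₂}` of `S_{n₁+n₂}`: permutations preserving
the first block `{i : i < n₁}` (hence also the second block). -/
def youngTwo (n1 n2 : ℕ) : Finset (Equiv.Perm (Fin (n1 + n2))) :=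
  Finset.univ.filter fun w => ∀ i : Fin (n1 + n2), ((w i : ℕ) < n1 ↔ (i : ℕ) < n1)

open Equiv
open scoped Nat

namespace SphericalTwoRow

theorem sum_antidiagonal_succ_sub_sum_antidiagonal {R : Type*} [CommRing R] (x y : R) (c : ℕ) :
    ∑ p ∈ antidiagonal (c + 1), ((p.1 : R) * p.2 + (x - p.1) * (y - p.2)) -
        ∑ p ∈ antidiagonal c, ((p.1 : R) * p.2 + (x - p.1) * (y - p.2)) =
      x * y - (x + y) * (c + 1) + ((c : R) + 1) ^ 2 - (c + 1) := by
  have hswap : ∑ p ∈ antidiagonal c, (p.2 : R) = ∑ p ∈ antidiagonal c, (p.1 : R) :=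
    Finset.Nat.sum_antidiagonal_swap (f := fun p => (p.1 : R))
  have hdiag : ∑ p ∈ antidiagonal c, ((p.1 : R) + p.2) = (c + 1) * c := by
    rw [sum_congr rfl fun p hp => by rw [← Nat.cast_add, HasAntidiagonal.mem_antidiagonal.1 hp],
      sum_const, Finset.Nat.card_antidiagonal, nsmul_eq_mul]
    push_cast
    ring
  have hstep : ∀ p ∈ antidiagonal c,
      (((p.1 + 1 : ℕ) : R) * p.2 + (x - (p.1 + 1 : ℕ)) * (y - p.2)) -
        ((p.1 : R) * p.2 + (x - p.1) * (y - p.2)) = 2 * p.2 - y := by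
    intro p _
    push_cast
    ring
  rw [Finset.Nat.sum_antidiagonal_succ, add_sub_assoc, ← sum_sub_distrib, sum_congr rfl hstep,
    sum_sub_distrib, ← mul_sum, sum_const, Finset.Nat.card_antidiagonal, nsmul_eq_mul, two_mul]
  nth_rw 1 [hswap]
  rw [← sum_add_distrib, hdiag]
  push_cast
  ring

theorem filter_card_eq_and_eq_filter_powersetCard {α : Type*} [Fintype α] (c : ℕ)
    (p : Finset α → Prop) [DecidablePred p] :
    univ.filter (fun s : Finset α => s.card = c ∧ p s) =
      {s ∈ powersetCard c (univ : Finset α) | p s} := by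
  ext s
  simp

variable {α : Type*} [DecidableEq α]

theorem card_filter_product_iff {β : Type*} [DecidableEq β] (s : Finset α) (t : Finset β)
    (p : α → Prop) (q : β → Prop) [DecidablePred p] [DecidablePred q] :
    #{x ∈ s ×ˢ t | p x.1 ↔ q x.2} =
      #{x ∈ s | p x} * #{y ∈ t | q y} + #{x ∈ s | ¬p x} * #{y ∈ t | ¬q y} := by
  have hsplit : {x ∈ s ×ˢ t | p x.1 ↔ q x.2} =
      {x ∈ s ×ˢ t | p x.1 ∧ q x.2} ∪ {x ∈ s ×ˢ t | ¬p x.1 ∧ ¬q x.2} := by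
    rw [← filter_or]
    exact filter_congr fun _ _ => iff_iff_and_or_not_and_not
  rw [hsplit, card_union_of_disjoint (disjoint_filter.2 fun _ _ h h' => h'.1 h.1),
    filter_product, filter_product (fun x => ¬p x) (fun y => ¬q y), card_product, card_product]

theorem card_filter_mem_powersetCard_div_choose {B : Finset α} {a : α} (ha : a ∈ B) {i : ℕ}
    (hi : i ≤ #B) : (#{S ∈ B.powersetCard i | a ∈ S} : ℚ) / (#B).choose i = i / #B := by
  rcases i with _ | j
  · simp
  have hcount : #{S ∈ B.powersetCard (j + 1) | a ∈ S} = (#B - 1).choose j := by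
    simpa using card_filter_powersetCard_subset {a} B (j + 1) (by simpa using ha) (by simp)
  obtain ⟨n, hn⟩ : ∃ n, #B = n + 1 := ⟨#B - 1, by have := card_pos.2 ⟨a, ha⟩; omega⟩
  rw [hn] at hi
  have key : ((n + 1 : ℕ) : ℚ) * n.choose j = (n + 1).choose (j + 1) * (j + 1 : ℕ) := by
    exact_mod_cast Nat.add_one_mul_choose_eq n j
  rw [hcount, hn, Nat.add_sub_cancel,
    div_eq_div_iff (by exact_mod_cast (Nat.choose_pos hi).ne') (by positivity)]
  push_cast at key ⊢
  linarith

theorem card_filter_not_mem_powersetCard_div_choose {B : Finset α} {a : α} (ha : a ∈ B)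
    {i : ℕ} (hi : i ≤ #B) :
    (#{S ∈ B.powersetCard i | a ∉ S} : ℚ) / (#B).choose i = (#B - i) / #B := by
  have hcount : {S ∈ B.powersetCard i | a ∉ S} = (B.erase a).powersetCard i := by
    ext S
    simp [mem_powersetCard, subset_erase, and_assoc, and_comm]
  obtain ⟨n, hn⟩ : ∃ n, #B = n + 1 := ⟨#B - 1, by have := card_pos.2 ⟨a, ha⟩; omega⟩
  rw [hn] at hi
  have key : (n.choose i : ℚ) * ((n + 1 : ℕ) : ℚ) = (n + 1).choose i * ((n + 1 - i : ℕ) : ℚ) := by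
    exact_mod_cast Nat.choose_mul_succ_eq n i
  rw [hcount, card_powersetCard, card_erase_of_mem ha, hn, Nat.add_sub_cancel,
    div_eq_div_iff (by exact_mod_cast (Nat.choose_pos hi).ne') (by positivity)]
  rw [Nat.cast_sub hi] at key
  push_cast at key ⊢
  linarith

theorem card_filter_mem_iff_div_choose {B₁ B₂ : Finset α} {a b : α} (ha : a ∈ B₁)
    (hb : b ∈ B₂) {i j : ℕ} (hi : i ≤ #B₁) (hj : j ≤ #B₂) :
    (#{x ∈ B₁.powersetCard i ×ˢ B₂.powersetCard j | a ∈ x.1 ↔ b ∈ x.2} : ℚ) /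
        ((#B₁).choose i * (#B₂).choose j) =
      (i * j + (#B₁ - i) * (#B₂ - j)) / (#B₁ * #B₂) := by
  rw [card_filter_product_iff _ _ (a ∈ ·) (b ∈ ·)]
  push_cast
  calc _ = (#{S ∈ B₁.powersetCard i | a ∈ S} : ℚ) / (#B₁).choose i *
          ((#{S ∈ B₂.powersetCard j | b ∈ S} : ℚ) / (#B₂).choose j) +
        (#{S ∈ B₁.powersetCard i | a ∉ S} : ℚ) / (#B₁).choose i *
          ((#{S ∈ B₂.powersetCard j | b ∉ S} : ℚ) / (#B₂).choose j) := by ring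
    _ = _ := by
      rw [card_filter_mem_powersetCard_div_choose ha hi,
        card_filter_mem_powersetCard_div_choose hb hj,
        card_filter_not_mem_powersetCard_div_choose ha hi,
        card_filter_not_mem_powersetCard_div_choose hb hj]
      ring

theorem mem_image_perm_iff (σ : Perm α) {s : Finset α} {x : α} :
    x ∈ s.image ⇑σ ↔ σ.symm x ∈ s := by
  nth_rw 1 [← σ.apply_symm_apply x]
  exact σ.injective.mem_finset_image

theorem image_perm_eq_self_iff (σ : Perm α) (s : Finset α) :
    s.image ⇑σ = s ↔ ∀ x, σ x ∈ s ↔ x ∈ s := by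
  constructor
  · intro e x
    conv_lhs => rw [← e]
    exact σ.injective.mem_finset_image
  · intro H
    ext y
    obtain ⟨x, rfl⟩ := σ.surjective y
    rw [σ.injective.mem_finset_image, H]

theorem image_mul_eq_self_iff (g h : Perm α) (s : Finset α) :
    s.image ⇑(g * h) = s ↔ s.image ⇑h = s.image ⇑g⁻¹ := by
  rw [Perm.coe_mul, ← image_image]
  constructor
  · intro e
    conv_rhs => rw [← e]
    rw [image_image, ← Perm.coe_mul, inv_mul_cancel, Perm.coe_one, image_id]
  · intro e
    rw [e, image_image, ← Perm.coe_mul, mul_inv_cancel, Perm.coe_one, image_id]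

theorem sum_card_filter_image_mul_eq_self (H : Finset (Perm α)) (𝒮 : Finset (Finset α))
    (g : Perm α) :
    ∑ h ∈ H, #{s ∈ 𝒮 | s.image ⇑(g * h) = s} =
      ∑ s ∈ 𝒮, #(H.filter fun h : Perm α => s.image ⇑h = s.image ⇑g⁻¹) := by
  simp only [card_filter, image_mul_eq_self_iff]
  exact sum_comm

theorem image_swap_eq_self {a b : α} {s : Finset α} (h : a ∈ s ↔ b ∈ s) :
    s.image ⇑(swap a b) = s := by
  rw [image_perm_eq_self_iff]
  intro x
  rcases eq_or_ne x a with rfl | hxa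
  · rw [swap_apply_left, h]
  rcases eq_or_ne x b with rfl | hxb
  · rw [swap_apply_right, h]
  · rw [swap_apply_of_ne_of_ne hxa hxb]

theorem card_image_swap_inter_add_one {a b : α} {B s : Finset α} (ha : a ∈ B) (hb : b ∉ B)
    (has : a ∈ s) (hbs : b ∉ s) : #(s.image ⇑(swap a b) ∩ B) + 1 = #(s ∩ B) := by
  have herase : s.image ⇑(swap a b) ∩ B = (s ∩ B).erase a := by
    ext x
    rw [mem_inter, mem_image_perm_iff, symm_swap, mem_erase, mem_inter]
    rcases eq_or_ne x a with rfl | hxa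
    · simp [hbs]
    rcases eq_or_ne x b with rfl | hxb
    · simp [hb]
    · rw [swap_apply_of_ne_of_ne hxa hxb]
      exact ⟨fun hx => ⟨hxa, hx⟩, fun hx => hx.2⟩
  rw [herase, card_erase_add_one (mem_inter.2 ⟨has, ha⟩)]

section Young

variable [Fintype α]

theorem sum_powersetCard_univ_eq_sum_antidiagonal {M : Type*} [AddCommMonoid M]
    (B : Finset α) (c : ℕ) (F : Finset α × Finset α → M) :
    ∑ s ∈ powersetCard c univ, F (s ∩ B, s \ B) =
      ∑ p ∈ antidiagonal c, ∑ x ∈ B.powersetCard p.1 ×ˢ Bᶜ.powersetCard p.2, F x := by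
  rw [sum_sigma']
  refine sum_nbij' (fun s => ⟨(#(s ∩ B), #(s \ B)), (s ∩ B, s \ B)⟩)
    (fun y => y.2.1 ∪ y.2.2) ?_ ?_ ?_ ?_ (fun _ _ => rfl)
  · intro s hs
    rw [mem_powersetCard_univ] at hs
    simp only [mem_sigma, HasAntidiagonal.mem_antidiagonal, mem_product, mem_powersetCard,
      and_true]
    exact ⟨by rw [card_inter_add_card_sdiff, hs], inter_subset_right,
      fun x hx => mem_compl.2 (mem_sdiff.1 hx).2⟩
  · rintro ⟨⟨i, j⟩, S₁, S₂⟩ hy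
    simp only [mem_sigma, HasAntidiagonal.mem_antidiagonal, mem_product, mem_powersetCard] at hy
    obtain ⟨hij, ⟨hS₁, rfl⟩, hS₂, rfl⟩ := hy
    rw [mem_powersetCard_univ, card_union_of_disjoint (disjoint_of_subset_left hS₁
      (disjoint_of_subset_right hS₂ disjoint_compl_right)), hij]
  · intro s _
    exact sup_inf_sdiff s B
  · rintro ⟨⟨i, j⟩, S₁, S₂⟩ hy
    simp only [mem_sigma, HasAntidiagonal.mem_antidiagonal, mem_product, mem_powersetCard] at hy
    obtain ⟨-, ⟨hS₁, rfl⟩, hS₂, rfl⟩ := hy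
    have h₁ : (S₁ ∪ S₂) ∩ B = S₁ := by
      ext x
      have := @hS₁ x
      have := @hS₂ x
      simp only [mem_inter, mem_union, mem_compl] at *
      tauto
    have h₂ : (S₁ ∪ S₂) \ B = S₂ := by
      ext x
      have := @hS₁ x
      have := @hS₂ x
      simp only [mem_sdiff, mem_union, mem_compl] at *
      tauto
    simp only [h₁, h₂]

/-- The Young subgroup `S_B × S_Bᶜ`. -/
def blockPerms (B : Finset α) : Finset (Perm α) := {h | ∀ x, h x ∈ B ↔ x ∈ B}

theorem card_filter_blockPerms_image_eq_self (B s : Finset α) :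
    #((blockPerms B).filter fun h : Perm α => s.image ⇑h = s) =
      (#(s ∩ B))! * (#(B \ s))! * ((#(s \ B))! * (#(Bᶜ \ s))!) := by
  -- `h` preserves `B` and `s` iff it preserves the four cells of the partition they generate
  let f : α → Bool × Bool := fun x => (x ∈ B, x ∈ s)
  have hstab : (blockPerms B).filter (fun h : Perm α => s.image ⇑h = s) =
      univ.filter fun h : Perm α => f ∘ ⇑h = f := by
    ext h
    simp [blockPerms, image_perm_eq_self_iff, f, funext_iff, forall_and]
  have hcell : ∀ p q : Bool,
      Fintype.card {x // f x = (p, q)} = #{x | (x ∈ B ↔ p) ∧ (x ∈ s ↔ q)} := by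
    intro p q
    rw [Fintype.card_subtype]
    congr 1
    ext x
    cases p <;> cases q <;> simp [f]
  rw [hstab, ← Fintype.card_subtype, DomMulAct.stabilizer_card, Fintype.prod_prod_type,
    Fintype.prod_bool, Fintype.prod_bool, Fintype.prod_bool, hcell, hcell, hcell, hcell]
  congr 4 <;> ext x <;> simp <;> tauto

theorem card_blockPerms (B : Finset α) : #(blockPerms B) = (#B)! * (#Bᶜ)! := by
  simpa using card_filter_blockPerms_image_eq_self B ∅

/-- Orbit–stabilizer for the action of the Young subgroup on subsets. -/
theorem card_filter_blockPerms_image_eq_self_mul_choose (B s : Finset α) :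
    #((blockPerms B).filter fun h : Perm α => s.image ⇑h = s) *
        ((#B).choose #(s ∩ B) * (#Bᶜ).choose #(s \ B)) = #(blockPerms B) := by
  have h₁ : #(B \ s) = #B - #(s ∩ B) := card_sdiff
  have h₂ : #(Bᶜ \ s) = #Bᶜ - #(s \ B) := by rw [card_sdiff, sdiff_eq_inter_compl]
  have e₁ := Nat.choose_mul_factorial_mul_factorial
    (card_le_card (inter_subset_right (s₁ := s) (s₂ := B)))
  have e₂ := Nat.choose_mul_factorial_mul_factorial
    (card_le_card (s := s \ B) fun x hx => mem_compl.2 (mem_sdiff.1 hx).2)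
  rw [card_filter_blockPerms_image_eq_self, card_blockPerms, h₁, h₂, ← e₁, ← e₂]
  ring

variable {B : Finset α}

theorem card_image_inter_of_mem_blockPerms {h : Perm α} (hh : h ∈ blockPerms B)
    (s : Finset α) : #(s.image ⇑h ∩ B) = #(s ∩ B) := by
  have hB := (mem_filter.1 hh).2
  have himage : s.image ⇑h ∩ B = (s ∩ B).image ⇑h := by
    ext y
    obtain ⟨x, rfl⟩ := h.surjective y
    simp only [mem_inter, h.injective.mem_finset_image, hB]
  rw [himage, card_image_of_injective _ h.injective]

theorem filter_blockPerms_image_eq_image_swap_eq_empty {a b : α} (ha : a ∈ B) (hb : b ∉ B)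
    {s : Finset α} (hab : ¬(a ∈ s ↔ b ∈ s)) :
    (blockPerms B).filter (fun h : Perm α => s.image ⇑h = s.image ⇑(swap a b)) = ∅ := by
  refine filter_eq_empty_iff.2 fun h hh e => ?_
  have hcard := card_image_inter_of_mem_blockPerms hh s
  rw [e] at hcard
  by_cases has : a ∈ s
  · have := card_image_swap_inter_add_one ha hb has (by tauto)
    omega
  · have hinv : (s.image ⇑(swap a b)).image ⇑(swap a b) = s := by
      rw [image_image, ← Perm.coe_mul, swap_mul_self, Perm.coe_one, image_id]
    have := card_image_swap_inter_add_one (s := s.image ⇑(swap a b)) ha hb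
      (by rw [mem_image_perm_iff, symm_swap, swap_apply_left]; tauto)
      (by rw [mem_image_perm_iff, symm_swap, swap_apply_right]; exact has)
    rw [hinv] at this
    omega

theorem sum_card_filter_image_swap_mul_eq_self_div {a b : α} (ha : a ∈ B) (hb : b ∉ B)
    {c : ℕ} (hc₁ : c ≤ #B) (hc₂ : c ≤ #Bᶜ) :
    ((∑ h ∈ blockPerms B, #{s ∈ powersetCard c univ | s.image ⇑(swap a b * h) = s} : ℕ) : ℚ) /
        #(blockPerms B) =
      (∑ p ∈ antidiagonal c, ((p.1 : ℚ) * p.2 + (#B - p.1) * (#Bᶜ - p.2))) / (#B * #Bᶜ) := by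
  let F : Finset α × Finset α → ℚ := fun x =>
    if a ∈ x.1 ↔ b ∈ x.2 then (((#B).choose #x.1 : ℚ) * (#Bᶜ).choose #x.2)⁻¹ else 0
  have hG : (#(blockPerms B) : ℚ) ≠ 0 := by
    rw [card_blockPerms]
    positivity
  rw [sum_card_filter_image_mul_eq_self, swap_inv, Nat.cast_sum, sum_div, sum_div]
  calc _ = ∑ s ∈ powersetCard c univ, F (s ∩ B, s \ B) := by
        refine sum_congr rfl fun s _ => ?_
        have hmem : (a ∈ s ∩ B ↔ b ∈ s \ B) ↔ (a ∈ s ↔ b ∈ s) := by simp [ha, hb]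
        simp only [F]
        by_cases hab : a ∈ s ↔ b ∈ s
        · rw [if_pos (hmem.2 hab), image_swap_eq_self hab]
          refine eq_inv_of_mul_eq_one_left ?_
          rw [div_mul_eq_mul_div, ← div_self hG,
            ← card_filter_blockPerms_image_eq_self_mul_choose B s]
          push_cast
          rfl
        · rw [if_neg (mt hmem.1 hab), filter_blockPerms_image_eq_image_swap_eq_empty ha hb hab,
            card_empty, Nat.cast_zero, zero_div]
    _ = ∑ p ∈ antidiagonal c, ∑ x ∈ B.powersetCard p.1 ×ˢ Bᶜ.powersetCard p.2, F x :=
        sum_powersetCard_univ_eq_sum_antidiagonal B c F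
    _ = _ := by
        refine sum_congr rfl fun p hp => ?_
        have hp' := HasAntidiagonal.mem_antidiagonal.1 hp
        have hF : ∀ x ∈ B.powersetCard p.1 ×ˢ Bᶜ.powersetCard p.2, F x =
            if a ∈ x.1 ↔ b ∈ x.2 then (((#B).choose p.1 : ℚ) * (#Bᶜ).choose p.2)⁻¹ else 0 := by
          intro x hx
          simp only [mem_product, mem_powersetCard] at hx
          simp only [F, hx.1.2, hx.2.2]
        rw [sum_congr rfl hF, ← sum_filter, sum_const, nsmul_eq_mul, ← div_eq_mul_inv,
          card_filter_mem_iff_div_choose ha (mem_compl.2 hb) (by omega) (by omega)]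

end Young

theorem chiTwoRow_zero (N : ℕ) (w : Perm (Fin N)) :
    chiTwoRow N 0 w = #{s ∈ powersetCard 0 univ | s.image ⇑w = s} := by
  rw [chiTwoRow, filter_card_eq_and_eq_filter_powersetCard]
  simp

theorem chiTwoRow_succ (N k : ℕ) (w : Perm (Fin N)) :
    chiTwoRow N (k + 1) w =
      #{s ∈ powersetCard (k + 1) univ | s.image ⇑w = s} -
        #{s ∈ powersetCard k univ | s.image ⇑w = s} := by
  simp only [chiTwoRow, Nat.add_right_cancel_iff, filter_card_eq_and_eq_filter_powersetCard]

theorem youngTwo_eq_blockPerms (n1 n2 : ℕ) :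
    youngTwo n1 n2 = blockPerms {i : Fin (n1 + n2) | (i : ℕ) < n1} := by
  ext h
  simp [youngTwo, blockPerms]

end SphericalTwoRow

open SphericalTwoRow in
theorem spherical_two_row_two_cycle_general (n1 n2 k : ℕ)
    (hk1 : k ≤ n1) (hk2 : k ≤ n2)
    (a b : Fin (n1 + n2)) (ha : (a : ℕ) < n1) (hb : n1 ≤ (b : ℕ)) :
    (1 / ((Nat.factorial n1 : ℚ) * (Nat.factorial n2 : ℚ))) *
        ∑ h ∈ youngTwo n1 n2, chiTwoRow (n1 + n2) k (Equiv.swap a b * h) =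
      ((n1 : ℚ) * n2 - ((n1 : ℚ) + n2) * k + (k : ℚ) ^ 2 - k) / ((n1 : ℚ) * n2) := by
  set B : Finset (Fin (n1 + n2)) := {i | (i : ℕ) < n1}
  have hB : #B = n1 := by simp [B, Fin.card_filter_val_lt]
  have hBc : #Bᶜ = n2 := by rw [card_compl, hB, Fintype.card_fin]; omega
  have hG : (n1 ! : ℚ) * n2 ! = #(blockPerms B) := by
    rw [card_blockPerms, hB, hBc]
    push_cast
    rfl
  have avg : ∀ c ≤ k, ((∑ h ∈ youngTwo n1 n2,
      #{s ∈ powersetCard c univ | s.image ⇑(swap a b * h) = s} : ℕ) : ℚ) / (n1 ! * n2 !) =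
        (∑ p ∈ antidiagonal c, ((p.1 : ℚ) * p.2 + (n1 - p.1) * (n2 - p.2))) / (n1 * n2) := by
    intro c hc
    have := sum_card_filter_image_swap_mul_eq_self_div (B := B) (by simpa [B] using ha)
      (by simpa [B] using hb) (c := c) (by omega) (by omega)
    rwa [hB, hBc, ← hG, ← youngTwo_eq_blockPerms] at this
  rw [one_div_mul_eq_div]
  rcases k with _ | k
  · simp only [chiTwoRow_zero, ← Nat.cast_sum, avg 0 le_rfl]
    simp
  · simp only [chiTwoRow_succ, sum_sub_distrib, ← Nat.cast_sum]
    rw [sub_div, avg _ le_rfl, avg k (Nat.le_succ k), ← sub_div,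
      sum_antidiagonal_succ_sub_sum_antidiagonal]
    push_cast
    ring

/-- Spherical function of `[N−k,k]` at a two-cycle exchanging one point of each block,
for the two-factor Young subgroup. -/
theorem spherical_two_row_two_cycle (n1 n2 k : ℕ) (h1 : 1 ≤ n1) (h2 : 1 ≤ n2)
    (hk1 : k ≤ n1) (hk2 : k ≤ n2)
    (a b : Fin (n1 + n2)) (ha : (a : ℕ) < n1) (hb : n1 ≤ (b : ℕ)) :
    (1 / ((Nat.factorial n1 : ℚ) * (Nat.factorial n2 : ℚ))) *
        ∑ h ∈ youngTwo n1 n2, chiTwoRow (n1 + n2) k (Equiv.swap a b * h) =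
      ((n1 : ℚ) * n2 - ((n1 : ℚ) + n2) * k + (k : ℚ) ^ 2 - k) / ((n1 : ℚ) * n2) :=
  spherical_two_row_two_cycle_general n1 n2 k hk1 hk2 a b ha hb
end
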